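/- With F_{n,k}(a,q) = [n choose k]_q · q^{k(k+1)/2} / (a q^k;q)_{n+1}, for all n ≥ 1 and all k: F_{n,k}(a,q) = F_{n−1,k}(a,q)/(1 − a q^n) + q^n · F_{n−1,k−1}(a q², q)/(1 − a q^n), with the convention F_{n,k} = 0 if k < 0 or k > n. -/

import Mathlib

/-- The q-shifted factorial `(x;q)_n`. -/
def qPoch {K : Type*} [Field K] (q x : K) (n : ℕ) : K :=
  ∏ j ∈ Finset.range n, (1 - x * q ^ j)

/-- The Gaussian binomial coefficient `[N choose k]_q` with integer arguments,
zero outside the range `0 ≤ k ≤ N`. -/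
def qBinomZ {K : Type*} [Field K] (q : K) (N k : ℤ) : K :=
  if 0 ≤ k ∧ k ≤ N then
    qPoch q q N.toNat / (qPoch q q k.toNat * qPoch q q (N - k).toNat)
  else 0

/-- The summand `F_{n,k}(a,q) = [n,k]_q q^{k(k+1)/2} / (a q^k;q)_{n+1}`;
it vanishes for `k < 0` or `k > n` via the convention on `qBinomZ`. -/
def lebesgueTerm {K : Type*} [Field K] (q a : K) (n : ℕ) (k : ℤ) : K :=
  qBinomZ q n k * q ^ (k * (k + 1) / 2) / qPoch q (a * q ^ k) (n + 1)

/-!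
The denominator `(a q^k; q)_{n+1}` factors both as `(a q^k; q)_n (1 - a q^{n+k})` and as
`(1 - a q^k) (a q^{k+1}; q)_n`, and `q^n q^{(k-1)k/2} = q^{k(k+1)/2} q^{n-k}`. Over this common
denominator the recurrence is the `a`-deformed q-Pascal rule
`[n,k] (1 - a q^n) = [n-1,k] (1 - a q^{n+k}) + [n-1,k-1] (1 - a q^k) q^{n-k}`.
Multiplied by `1 - q^n`, that rule follows from the absorption identities
`[n-1,k] (1 - q^n) = [n,k] (1 - q^{n-k})` and `[n-1,k-1] (1 - q^n) = [n,k] (1 - q^k)`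
(the second is the first under `[n,k] = [n,n-k]`) by a polynomial identity in `q^k` and `q^{n-k}`.
-/
section

variable {K : Type*} [Field K]

theorem qPoch_succ (q x : K) (n : ℕ) : qPoch q x (n + 1) = qPoch q x n * (1 - x * q ^ n) :=
  Finset.prod_range_succ _ _

theorem qPoch_succ' (q x : K) (n : ℕ) : qPoch q x (n + 1) = (1 - x) * qPoch q (x * q) n := by
  simp only [qPoch, Finset.prod_range_succ', pow_succ', pow_zero, mul_one, mul_assoc]
  exact mul_comm _ _

theorem qPoch_ne_zero_of_le {q x : K} {m n : ℕ} (h : qPoch q x n ≠ 0) (hmn : m ≤ n) :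
    qPoch q x m ≠ 0 := by
  rw [qPoch, Finset.prod_ne_zero_iff] at h ⊢
  exact fun j hj ↦ h j (Finset.range_subset_range.2 hmn hj)

theorem qBinomZ_eq_zero {q : K} {N k : ℤ} (h : ¬(0 ≤ k ∧ k ≤ N)) : qBinomZ q N k = 0 :=
  if_neg h

theorem qBinomZ_natCast (q : K) {m n : ℕ} (h : m ≤ n) :
    qBinomZ q n m = qPoch q q n / (qPoch q q m * qPoch q q (n - m)) := by
  rw [qBinomZ, if_pos ⟨m.cast_nonneg, by exact_mod_cast h⟩, ← Nat.cast_sub h]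
  simp only [Int.toNat_natCast]

theorem qBinomZ_symm (q : K) (N k : ℤ) : qBinomZ q N (N - k) = qBinomZ q N k := by
  simp only [qBinomZ, sub_sub_cancel, mul_comm (qPoch q q k.toNat)]
  congr 1
  exact propext (by omega)

theorem qBinomZ_mul_one_sub_pow {q : K} {n : ℕ} (hqq : qPoch q q (n + 1) ≠ 0) (k : ℤ) :
    qBinomZ q n k * (1 - q ^ (n + 1)) = qBinomZ q (n + 1) k * (1 - q ^ ((n : ℤ) + 1 - k)) := by
  by_cases hk : 0 ≤ k ∧ k ≤ n
  · obtain ⟨m, r, rfl, rfl⟩ : ∃ m r : ℕ, k = m ∧ n = m + r :=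
      ⟨k.toNat, n - k.toNat, by omega, by omega⟩
    obtain ⟨hr, hr'⟩ := mul_ne_zero_iff.1 <|
      qPoch_succ q q r ▸ qPoch_ne_zero_of_le hqq (by omega : r + 1 ≤ m + r + 1)
    have hm : qPoch q q m ≠ 0 := qPoch_ne_zero_of_le hqq (by omega)
    have hbinom := qBinomZ_natCast q (by omega : m ≤ m + r + 1)
    rw [qBinomZ_natCast q (by omega : m ≤ m + r)]
    push_cast at hbinom ⊢
    rw [hbinom, show m + r + 1 - m = r + 1 by omega,
      Nat.add_sub_cancel_left, show (m + r + 1 - m : ℤ) = (r + 1 : ℕ) by push_cast; ring,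
      zpow_natCast, qPoch_succ q q (m + r), qPoch_succ q q r]
    field_simp
    ring
  · rw [qBinomZ_eq_zero hk, zero_mul]
    rcases lt_trichotomy k (n + 1) with h | h | h
    · rw [qBinomZ_eq_zero (by omega), zero_mul]
    · simp [h]
    · rw [qBinomZ_eq_zero (by omega), zero_mul]

theorem qBinomZ_sub_one_mul_one_sub_pow {q : K} {n : ℕ} (hqq : qPoch q q (n + 1) ≠ 0) (k : ℤ) :
    qBinomZ q n (k - 1) * (1 - q ^ (n + 1)) = qBinomZ q (n + 1) k * (1 - q ^ k) := by
  rw [← qBinomZ_symm q n, ← qBinomZ_symm q (n + 1) k, show (n : ℤ) - (k - 1) = n + 1 - k by ring,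
    qBinomZ_mul_one_sub_pow hqq, sub_sub_cancel]

theorem qBinomZ_mul_one_sub_mul_pow {q : K} {n : ℕ} (hq : q ≠ 0) (hqq : qPoch q q (n + 1) ≠ 0)
    (a : K) (k : ℤ) :
    qBinomZ q (n + 1) k * (1 - a * q ^ ((n : ℤ) + 1)) =
      qBinomZ q n k * (1 - a * q ^ ((n : ℤ) + 1 + k)) +
        qBinomZ q n (k - 1) * (1 - a * q ^ k) * q ^ ((n : ℤ) + 1 - k) := by
  have hqn : (1 - q ^ (n + 1) : K) ≠ 0 := by
    rw [qPoch_succ, ← pow_succ'] at hqq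
    exact right_ne_zero_of_mul hqq
  have hsplit : q ^ ((n : ℤ) + 1) = q ^ ((n : ℤ) + 1 - k) * q ^ k := by
    rw [← zpow_add₀ hq, sub_add_cancel]
  have hnat : q ^ (n + 1) = q ^ ((n : ℤ) + 1 - k) * q ^ k := by
    rw [← hsplit, ← Nat.cast_add_one, zpow_natCast]
  have habs := qBinomZ_mul_one_sub_pow hqq k
  have habs' := qBinomZ_sub_one_mul_one_sub_pow hqq k
  rw [hnat] at habs habs' hqn
  apply mul_right_cancel₀ hqn
  rw [zpow_add₀ hq _ k, hsplit]
  linear_combination (-(1 - a * (q ^ ((n : ℤ) + 1 - k) * q ^ k) * q ^ k)) * habs -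
    ((1 - a * q ^ k) * q ^ ((n : ℤ) + 1 - k)) * habs'

theorem lebesgueTerm_eq_div_qPoch_succ {q a : K} (hq : q ≠ 0) {n : ℕ} {k : ℤ}
    (h : 1 - a * q ^ ((n : ℤ) + 1 + k) ≠ 0) :
    lebesgueTerm q a n k =
      qBinomZ q n k * q ^ (k * (k + 1) / 2) * (1 - a * q ^ ((n : ℤ) + 1 + k)) /
        qPoch q (a * q ^ k) (n + 2) := by
  rw [lebesgueTerm, qPoch_succ q _ (n + 1), mul_assoc a, ← zpow_natCast, ← zpow_add₀ hq,
    show k + ((n + 1 : ℕ) : ℤ) = n + 1 + k by push_cast; ring, mul_div_mul_right _ _ h]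

theorem zpow_mul_lebesgueTerm_sub_one {q a : K} (hq : q ≠ 0) {n : ℕ} {k : ℤ}
    (h : 1 - a * q ^ k ≠ 0) :
    q ^ ((n : ℤ) + 1) * lebesgueTerm q (a * q ^ 2) n (k - 1) =
      qBinomZ q n (k - 1) * q ^ (k * (k + 1) / 2) * ((1 - a * q ^ k) * q ^ ((n : ℤ) + 1 - k)) /
        qPoch q (a * q ^ k) (n + 2) := by
  have hshift : a * q ^ 2 * q ^ (k - 1) = a * q ^ k * q := by
    rw [zpow_sub_one₀ hq]; field_simp
  have htri : q ^ ((k - 1) * (k - 1 + 1) / 2) * q ^ ((n : ℤ) + 1) =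
      q ^ (k * (k + 1) / 2) * q ^ ((n : ℤ) + 1 - k) := by
    rw [← zpow_add₀ hq, ← zpow_add₀ hq]
    congr 1
    rw [show k * (k + 1) = (k - 1) * (k - 1 + 1) + k * 2 by ring,
      Int.add_mul_ediv_right _ _ two_ne_zero]
    ring
  rw [lebesgueTerm, qPoch_succ' q _ (n + 1), hshift]
  field_simp
  rw [mul_assoc _ (q ^ (k * (k + 1) / 2)), ← htri]
  ring

end

/-- The recurrence for the summand of the finite Lebesgue identity:
`F_{n,k}(a,q) = F_{n−1,k}(a,q)/(1 − a q^n) + q^n F_{n−1,k−1}(a q², q)/(1 − a q^n)`. -/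
theorem lebesgue_term_rec {K : Type*} [Field K] (q a : K) (n : ℕ) (k : ℤ)
    (hn : 1 ≤ n) (hq : q ≠ 0) (hqq : qPoch q q n ≠ 0)
    (ha : ∀ j : ℤ, 1 - a * q ^ j ≠ 0) :
    lebesgueTerm q a n k
    = lebesgueTerm q a (n - 1) k / (1 - a * q ^ (n : ℤ)) +
      q ^ (n : ℤ) * lebesgueTerm q (a * q ^ 2) (n - 1) (k - 1) / (1 - a * q ^ (n : ℤ)) := by
  obtain ⟨n, rfl⟩ : ∃ m, n = m + 1 := ⟨n - 1, by omega⟩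
  rw [lebesgueTerm, Nat.add_sub_cancel, Nat.cast_add_one, ← add_div,
    lebesgueTerm_eq_div_qPoch_succ hq (ha _), zpow_mul_lebesgueTerm_sub_one hq (ha k), ← add_div,
    eq_div_iff (ha _), div_mul_eq_mul_div]
  congr 1
  linear_combination q ^ (k * (k + 1) / 2) * qBinomZ_mul_one_sub_mul_pow hq hqq a k
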